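/- arXiv:2103.07375 — 3 statements merged into one kernel-verified Lean document; each statement's English description precedes it below -/
import Mathlib

section
/- If G is a connected graph with edge dimension edim(G) = 2, then G does not contain K_{3,3} as a subgraph. -/
/-!
Every vertex `w` sees the nine edges `uᵢvⱼ` of a `K_{3,3}` at edge distances that pairwise
differ by at most one, since `uᵢvⱼ` and `uₖvₗ` are joined by the edges `uᵢvₗ` and `vⱼuₖ`.
Two such distances that also have the same parity are equal, so a resolving set `{s, t}`
would have to separate nine edges by the four parity patterns of their distances to `s`
and `t`, which is impossible.
-/

open Finset
open scoped Classical

variable {V : Type*}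

/-- Distance from a vertex to an edge: minimum distance to an endpoint. -/
noncomputable def SimpleGraph.edgeDist (G : SimpleGraph V) (e : Sym2 V) (v : V) : ℕ :=
  Sym2.lift ⟨fun a b => min (G.dist a v) (G.dist b v), fun a b => min_comm _ _⟩ e

/-- A set of vertices is an edge resolving set if every pair of distinct edges
is distinguished by some vertex of the set. -/
def SimpleGraph.IsEdgeResolvingSet (G : SimpleGraph V) (S : Set V) : Prop :=
  ∀ e₁ ∈ G.edgeSet, ∀ e₂ ∈ G.edgeSet, e₁ ≠ e₂ →
    ∃ s ∈ S, G.edgeDist e₁ s ≠ G.edgeDist e₂ s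

/-- The edge dimension: minimum cardinality of an edge resolving set. -/
noncomputable def SimpleGraph.edim (G : SimpleGraph V) [Fintype V] : ℕ :=
  sInf {n | ∃ S : Finset V, G.IsEdgeResolvingSet ↑S ∧ S.card = n}

/-- An edge resolving function: a `[0,1]`-valued weighting of the vertices such
that every pair of distinct edges is resolved by total weight at least 1. -/
def SimpleGraph.IsEdgeResolvingFunction (G : SimpleGraph V) [Fintype V] (g : V → ℝ) : Prop :=
  (∀ v, 0 ≤ g v ∧ g v ≤ 1) ∧
  ∀ e₁ ∈ G.edgeSet, ∀ e₂ ∈ G.edgeSet, e₁ ≠ e₂ →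
    1 ≤ ∑ z ∈ Finset.univ.filter (fun z => G.edgeDist e₁ z ≠ G.edgeDist e₂ z), g z

/-- The fractional edge dimension. -/
noncomputable def SimpleGraph.edimf (G : SimpleGraph V) [Fintype V] : ℝ :=
  sInf {x | ∃ g : V → ℝ, G.IsEdgeResolvingFunction g ∧ ∑ v, g v = x}

open Function

lemma Sym2.injective_mk_of_forall_ne {ι κ α : Type*} {u : ι → α} {v : κ → α}
    (hu : Injective u) (hv : Injective v) (huv : ∀ i j, u i ≠ v j) :
    Injective fun p : ι × κ => s(u p.1, v p.2) := by
  rintro ⟨i, j⟩ ⟨i', j'⟩ h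
  rcases Sym2.eq_iff.mp h with ⟨hi, hj⟩ | ⟨hij, -⟩
  · exact Prod.ext (hu hi) (hv hj)
  · exact absurd hij (huv i j')

namespace SimpleGraph

variable {G : SimpleGraph V}

lemma Adj.dist_le_dist_add_one {a b : V} (hab : G.Adj a b) (w : V) :
    G.dist a w ≤ G.dist b w + 1 := by
  have := hab.reachable.dist_triangle_left w
  rw [dist_eq_one_iff_adj.mpr hab] at this
  omega

lemma edgeDist_mk (a b w : V) : G.edgeDist s(a, b) w = min (G.dist a w) (G.dist b w) := rfl

lemma edgeDist_le_edgeDist_add_one {a b a' b' : V} (hab' : G.Adj a b') (hba' : G.Adj b a')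
    (w : V) : G.edgeDist s(a, b) w ≤ G.edgeDist s(a', b') w + 1 := by
  rw [edgeDist_mk, edgeDist_mk]
  have := hab'.dist_le_dist_add_one w
  have := hba'.dist_le_dist_add_one w
  omega

lemma exists_isEdgeResolvingSet_card_eq_edim [Fintype V] (h : G.edim ≠ 0) :
    ∃ S : Finset V, G.IsEdgeResolvingSet S ∧ S.card = G.edim :=
  Nat.sInf_mem (Nat.nonempty_of_pos_sInf (Nat.pos_of_ne_zero h))

/-- Distances within one of each other are equal once their parities agree, so such edges are
told apart by `S` only through the parities of their distances. -/
lemma IsEdgeResolvingSet.card_le_two_pow {ι : Type*} [Fintype ι] {S : Finset V}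
    (hS : G.IsEdgeResolvingSet S) {e : ι → Sym2 V} (he : ∀ i, e i ∈ G.edgeSet)
    (he_inj : Injective e)
    (hclose : ∀ i j, ∀ s ∈ S, G.edgeDist (e i) s ≤ G.edgeDist (e j) s + 1) :
    Fintype.card ι ≤ 2 ^ S.card := by
  let parity (i : ι) (s : S) : Fin 2 := ⟨G.edgeDist (e i) s % 2, Nat.mod_lt _ two_pos⟩
  have parity_inj : Injective parity := by
    intro i j hij
    by_contra hne
    obtain ⟨s, hs, hdist⟩ := hS _ (he i) _ (he j) (he_inj.ne hne)
    have hmod := congrArg Fin.val (congrFun hij ⟨s, hs⟩)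
    have := hclose i j s hs
    have := hclose j i s hs
    exact hdist (by simp only [parity] at hmod; omega)
  simpa using Fintype.card_le_of_injective parity parity_inj

end SimpleGraph

theorem stmt_4_general [Fintype V] (G : SimpleGraph V) (h : G.edim = 2) :
    ¬ ∃ (u v : Fin 3 ↪ V), (∀ i j : Fin 3, u i ≠ v j) ∧
      (∀ i j : Fin 3, G.Adj (u i) (v j)) := by
  rintro ⟨u, v, huv, hadj⟩
  obtain ⟨S, hS, hcard⟩ := G.exists_isEdgeResolvingSet_card_eq_edim (by omega)
  have := hS.card_le_two_pow (e := fun p : Fin 3 × Fin 3 => s(u p.1, v p.2))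
    (fun p => hadj p.1 p.2) (Sym2.injective_mk_of_forall_ne u.injective v.injective huv)
    (fun p q _ _ => SimpleGraph.edgeDist_le_edgeDist_add_one (hadj p.1 q.2) (hadj q.1 p.2).symm _)
  simp [hcard, h] at this

/-- If `edim(G) = 2` then `G` contains no `K_{3,3}` subgraph. -/
theorem stmt_4 [Fintype V] (G : SimpleGraph V) (hG : G.Connected) (h : G.edim = 2) :
    ¬ ∃ (u v : Fin 3 ↪ V), (∀ i j : Fin 3, u i ≠ v j) ∧
      (∀ i j : Fin 3, G.Adj (u i) (v j)) :=
  stmt_4_general G h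
end

section
/- For the cycle C_n with n ≥ 4 even, edim_f(C_n) = n/(n−2). -/
open Finset
open scoped Classical

variable {V : Type*}

/-! On `C_n` the distance is `d(u, v) = min (v - u) (u - v)` computed in `ℤ/nℤ`, so the edge
`u_i u_{i+1}` lies at distance `min (a - 1) (n - a)` from `u_{i+a}`. Two of these profiles, for
edges `i ≠ j`, agree at `z` exactly when `2z = i + j + 1` in `ℤ/nℤ`, which has at most two
solutions; so any two edges are resolved by at least `n - 2` vertices and the constant weight
`1/(n-2)` is resolving. For adjacent edges the two solutions are `u_{i+1}` and `u_{i+1+n/2}`, so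
every resolving `g` has `1 + g(u_{i+1}) + g(u_{i+1+n/2}) ≤ ∑ g`; summing over `i` gives
`n + 2 ∑ g ≤ n ∑ g`. -/

open SimpleGraph
open Fin.CommRing

lemma Nat.min_sub_one_sub_eq_iff {n a b : ℕ} (ha : a < n) (hb : b < n) :
    min (a - 1) (n - a) = min (b - 1) (n - b) ↔ a = b ∨ a + b = 1 ∨ a + b = n + 1 := by
  omega

namespace Fin

variable {n : ℕ}

def cyclicNorm (x : Fin n) : ℕ := min x.val (-x).val

variable [NeZero n]

lemma cyclicNorm_eq (x : Fin n) : x.cyclicNorm = min x.val (n - x.val) := by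
  rw [cyclicNorm, Fin.val_neg]
  split_ifs with hx
  · simp [hx]
  · rfl

lemma cyclicNorm_add_le (x y : Fin n) : (x + y).cyclicNorm ≤ x.cyclicNorm + y.cyclicNorm := by
  rw [cyclicNorm_eq, cyclicNorm_eq, cyclicNorm_eq, Fin.val_add_eq_ite]
  split_ifs <;> omega

lemma val_one_of_one_lt (hn : 1 < n) : (1 : Fin n).val = 1 := by
  rw [Fin.val_one', Nat.mod_eq_of_lt hn]

lemma min_cyclicNorm_cyclicNorm_sub_one (hn : 1 < n) (x : Fin n) :
    min x.cyclicNorm (x - 1).cyclicNorm = min (x.val - 1) (n - x.val) := by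
  have hx : x.val = if n ≤ (x - 1).val + 1 then (x - 1).val + 1 - n else (x - 1).val + 1 := by
    rw [← val_one_of_one_lt hn, ← Fin.val_add_eq_ite, sub_add_cancel]
  rw [cyclicNorm_eq, cyclicNorm_eq]
  have := (x - 1).isLt
  split_ifs at hx <;> omega

lemma two_mul_val_of_two_mul_eq_zero {d : Fin n} (hd : 2 * d = 0) (hd0 : d ≠ 0) :
    2 * d.val = n := by
  rw [two_mul, Fin.ext_iff, Fin.val_add_eq_ite, Fin.val_zero] at hd
  rw [Ne, Fin.ext_iff, Fin.val_zero] at hd0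
  have := d.isLt
  split_ifs at hd <;> omega

lemma card_filter_two_mul_eq_le_two (c : Fin n) : #{z : Fin n | 2 * z = c} ≤ 2 := by
  by_contra! h
  obtain ⟨x, hx, y, hy, z, hz, hxy, hxz, hyz⟩ := two_lt_card.mp h
  simp only [mem_filter, mem_univ, true_and] at hx hy hz
  have hval (w : Fin n) (hw : 2 * w = c) (hwx : x ≠ w) : 2 * (w - x).val = n :=
    two_mul_val_of_two_mul_eq_zero (by linear_combination hw - hx) (sub_ne_zero.mpr hwx.symm)
  have : y - x = z - x := Fin.ext (by have := hval y hy hxy; have := hval z hz hxz; omega)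
  exact hyz (sub_left_inj.mp this)

lemma exists_ne_zero_two_mul_eq_zero (hn : 2 ≤ n) (he : Even n) :
    ∃ h : Fin n, h ≠ 0 ∧ 2 * h = 0 := by
  obtain ⟨k, rfl⟩ := he
  refine ⟨⟨k, by omega⟩, fun h => ?_, ?_⟩
  · have : k = 0 := congrArg Fin.val h
    omega
  · rw [two_mul, Fin.ext_iff, Fin.val_add_eq_ite]
    simp

end Fin
namespace SimpleGraph

variable [Fintype V] {G : SimpleGraph V}

lemma IsEdgeResolvingFunction.one_add_sum_le {g : V → ℝ} (hg : G.IsEdgeResolvingFunction g)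
    {e₁ e₂ : Sym2 V} (he₁ : e₁ ∈ G.edgeSet) (he₂ : e₂ ∈ G.edgeSet) (hne : e₁ ≠ e₂)
    (T : Finset V) (hT : ∀ z ∈ T, G.edgeDist e₁ z = G.edgeDist e₂ z) :
    1 + ∑ z ∈ T, g z ≤ ∑ z, g z := by
  have hsub : univ.filter (fun z => G.edgeDist e₁ z ≠ G.edgeDist e₂ z) ⊆ univ \ T := fun z hz =>
    mem_sdiff.mpr ⟨mem_univ z, fun hzT => (mem_filter.mp hz).2 (hT z hzT)⟩
  calc 1 + ∑ z ∈ T, g z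
        ≤ ∑ z ∈ univ.filter (fun z => G.edgeDist e₁ z ≠ G.edgeDist e₂ z), g z + ∑ z ∈ T, g z :=
        add_le_add (hg.2 e₁ he₁ e₂ he₂ hne) le_rfl
    _ ≤ ∑ z ∈ univ \ T, g z + ∑ z ∈ T, g z :=
        add_le_add (sum_le_sum_of_subset_of_nonneg hsub fun z _ _ => (hg.1 z).1) le_rfl
    _ = ∑ z, g z := sum_sdiff (subset_univ T)

lemma isEdgeResolvingFunction_const {m : ℕ} (hm : 0 < m)
    (h : ∀ e₁ ∈ G.edgeSet, ∀ e₂ ∈ G.edgeSet, e₁ ≠ e₂ →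
      m ≤ #{z | G.edgeDist e₁ z ≠ G.edgeDist e₂ z}) :
    G.IsEdgeResolvingFunction fun _ => (m : ℝ)⁻¹ := by
  have hm' : (1 : ℝ) ≤ m := by exact_mod_cast hm
  refine ⟨fun _ => ⟨by positivity, inv_le_one_of_one_le₀ hm'⟩, fun e₁ he₁ e₂ he₂ hne => ?_⟩
  rw [sum_const, nsmul_eq_mul, ← div_eq_mul_inv, one_le_div (by positivity)]
  exact_mod_cast h e₁ he₁ e₂ he₂ hne

end SimpleGraph

namespace SimpleGraph

variable {n : ℕ} [NeZero n]

lemma cycleGraph_connected_of_neZero : (cycleGraph n).Connected :=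
  Connected.mk cycleGraph_preconnected

lemma cycleGraph_adj_add_one (hn : 1 < n) (x : Fin n) : (cycleGraph n).Adj x (x + 1) := by
  rw [cycleGraph_adj', add_sub_cancel_left, Fin.val_one_of_one_lt hn]
  exact Or.inr rfl

lemma cyclicNorm_sub_le_one_of_adj {u v : Fin n} (h : (cycleGraph n).Adj u v) :
    (v - u).cyclicNorm ≤ 1 := by
  rw [Fin.cyclicNorm, neg_sub]
  rcases cycleGraph_adj'.mp h with h | h <;> omega

lemma cyclicNorm_sub_le_length {u v : Fin n} (p : (cycleGraph n).Walk u v) :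
    (v - u).cyclicNorm ≤ p.length := by
  induction p with
  | nil => simp [Fin.cyclicNorm]
  | @cons u w v h p ih =>
    calc (v - u).cyclicNorm = (v - w + (w - u)).cyclicNorm := by rw [sub_add_sub_cancel]
      _ ≤ (v - w).cyclicNorm + (w - u).cyclicNorm := Fin.cyclicNorm_add_le _ _
      _ ≤ (Walk.cons h p).length := by
        rw [Walk.length_cons]
        exact add_le_add ih (cyclicNorm_sub_le_one_of_adj h)

lemma cycleGraph_dist_add_natCast_le (hn : 1 < n) (u : Fin n) (k : ℕ) :
    (cycleGraph n).dist u (u + k) ≤ k := by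
  induction k with
  | zero => simp
  | succ k ih =>
    have hadj : (cycleGraph n).Adj (u + k) (u + (k + 1 : ℕ)) := by
      rw [Nat.cast_succ, ← add_assoc]
      exact cycleGraph_adj_add_one hn _
    calc (cycleGraph n).dist u (u + (k + 1 : ℕ))
        ≤ (cycleGraph n).dist u (u + k) + (cycleGraph n).dist (u + k) (u + (k + 1 : ℕ)) :=
          cycleGraph_connected_of_neZero.dist_triangle
      _ ≤ k + 1 := by rw [dist_eq_one_iff_adj.mpr hadj]; omega

lemma cycleGraph_dist_le_val_sub (hn : 1 < n) (u v : Fin n) :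
    (cycleGraph n).dist u v ≤ (v - u).val := by
  simpa using cycleGraph_dist_add_natCast_le hn u (v - u).val

theorem cycleGraph_dist (hn : 1 < n) (u v : Fin n) :
    (cycleGraph n).dist u v = (v - u).cyclicNorm := by
  refine le_antisymm (le_min (cycleGraph_dist_le_val_sub hn u v) ?_) ?_
  · rw [neg_sub, dist_comm]
    exact cycleGraph_dist_le_val_sub hn v u
  · obtain ⟨p, hp⟩ := (cycleGraph_connected_of_neZero u v).exists_walk_length_eq_dist
    exact hp ▸ cyclicNorm_sub_le_length p

lemma exists_eq_mk_add_one_of_mem_edgeSet (hn : 1 < n) {e : Sym2 (Fin n)}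
    (he : e ∈ (cycleGraph n).edgeSet) : ∃ i, e = s(i, i + 1) := by
  induction e with
  | _ u v =>
    rw [mem_edgeSet, cycleGraph_adj', ← Fin.val_one_of_one_lt hn, ← Fin.ext_iff,
      ← Fin.ext_iff, sub_eq_iff_eq_add', sub_eq_iff_eq_add'] at he
    rcases he with rfl | rfl
    · exact ⟨v, Sym2.eq_swap⟩
    · exact ⟨u, rfl⟩

-- At `z = i` the truncated `0 - 1 = 0` gives the correct value `0`.
lemma cycleGraph_edgeDist (hn : 1 < n) (i z : Fin n) :
    (cycleGraph n).edgeDist s(i, i + 1) z = min ((z - i).val - 1) (n - (z - i).val) := by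
  rw [← Fin.min_cyclicNorm_cyclicNorm_sub_one hn, sub_sub, edgeDist]
  exact congr_arg₂ min (cycleGraph_dist hn i z) (cycleGraph_dist hn (i + 1) z)

theorem cycleGraph_edgeDist_eq_iff (hn : 1 < n) {i j z : Fin n} :
    (cycleGraph n).edgeDist s(i, i + 1) z = (cycleGraph n).edgeDist s(j, j + 1) z ↔
      i = j ∨ 2 * z = i + j + 1 := by
  have hsum : 2 * z = i + j + 1 ↔ (z - i + (z - j)).val = 1 := by
    rw [← Fin.val_one_of_one_lt hn, ← Fin.ext_iff]
    constructor <;> intro h <;> linear_combination h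
  rw [cycleGraph_edgeDist hn, cycleGraph_edgeDist hn,
    Nat.min_sub_one_sub_eq_iff (Fin.isLt _) (Fin.isLt _), ← Fin.ext_iff, sub_right_inj, eq_comm,
    hsum, Fin.val_add_eq_ite]
  have := (z - i).isLt
  have := (z - j).isLt
  split_ifs <;> omega

lemma card_filter_edgeDist_eq_le_two (hn : 1 < n) {i j : Fin n} (hij : i ≠ j) :
    #{z | (cycleGraph n).edgeDist s(i, i + 1) z = (cycleGraph n).edgeDist s(j, j + 1) z} ≤ 2 := by
  simp_rw [cycleGraph_edgeDist_eq_iff hn, hij, false_or]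
  exact Fin.card_filter_two_mul_eq_le_two _

lemma mk_add_one_ne_mk_add_one_add_one (hn : 2 < n) (i : Fin n) :
    s(i, i + 1) ≠ s(i + 1, i + 1 + 1) := by
  have h1 := Fin.val_one_of_one_lt (by omega : 1 < n)
  rw [Ne, Sym2.eq_iff, add_assoc]
  rintro (⟨h, -⟩ | ⟨h, -⟩)
  · rw [left_eq_add, Fin.ext_iff, h1, Fin.val_zero] at h
    omega
  · rw [left_eq_add, Fin.ext_iff, Fin.val_add_eq_ite, h1, Fin.val_zero] at h
    split_ifs at h
    omega

lemma cycleGraph_isEdgeResolvingFunction_const (hn : 2 < n) :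
    (cycleGraph n).IsEdgeResolvingFunction fun _ => ((n - 2 : ℕ) : ℝ)⁻¹ := by
  refine isEdgeResolvingFunction_const (by omega) fun e₁ he₁ e₂ he₂ hne => ?_
  obtain ⟨i, rfl⟩ := exists_eq_mk_add_one_of_mem_edgeSet (by omega) he₁
  obtain ⟨j, rfl⟩ := exists_eq_mk_add_one_of_mem_edgeSet (by omega) he₂
  have hle := card_filter_edgeDist_eq_le_two (by omega) fun h : i = j => hne (h ▸ rfl)
  have hsplit := card_filter_add_card_filter_not (s := univ) fun z =>
    (cycleGraph n).edgeDist s(i, i + 1) z = (cycleGraph n).edgeDist s(j, j + 1) z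
  rw [card_univ, Fintype.card_fin] at hsplit
  simp only [ne_eq]
  omega

lemma cycleGraph_le_sub_two_mul_sum (hn : 2 < n) (he : Even n) {g : Fin n → ℝ}
    (hg : (cycleGraph n).IsEdgeResolvingFunction g) : (n : ℝ) ≤ (n - 2) * ∑ z, g z := by
  obtain ⟨h, h0, h2⟩ := Fin.exists_ne_zero_two_mul_eq_zero (by omega) he
  have hadj (i : Fin n) : 1 + (g (i + 1) + g (i + (1 + h))) ≤ ∑ z, g z := by
    rw [← sum_pair (by simpa [eq_comm] using h0 : i + 1 ≠ i + (1 + h))]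
    refine hg.one_add_sum_le (cycleGraph_adj_add_one (by omega) i)
      (cycleGraph_adj_add_one (by omega) (i + 1)) (mk_add_one_ne_mk_add_one_add_one hn i) _ ?_
    simp only [mem_insert, mem_singleton, cycleGraph_edgeDist_eq_iff (by omega : 1 < n)]
    rintro z (rfl | rfl) <;> right
    · ring
    · linear_combination h2
  have hshift (c : Fin n) : ∑ i, g (i + c) = ∑ i, g i :=
    Fintype.sum_equiv (Equiv.addRight c) _ _ fun _ => rfl
  have hsum := sum_le_sum fun i (_ : i ∈ univ) => hadj i
  rw [sum_add_distrib, sum_add_distrib, hshift, hshift] at hsum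
  simp only [sum_const, card_univ, Fintype.card_fin, nsmul_eq_mul, mul_one] at hsum
  linarith

end SimpleGraph

/-- For the even cycle `C_n`, `n ≥ 4`, `edim_f(C_n) = n / (n - 2)`. -/
theorem stmt_12 (n : ℕ) (hn : 4 ≤ n) (heven : Even n) :
    (SimpleGraph.cycleGraph n).edimf = (n : ℝ) / ((n : ℝ) - 2) := by
  have : NeZero n := ⟨by omega⟩
  have hn2 : (0 : ℝ) < n - 2 := by
    have : (4 : ℝ) ≤ n := by exact_mod_cast hn
    linarith
  have hcast : ((n - 2 : ℕ) : ℝ) = n - 2 := by push_cast [Nat.cast_sub (by omega : 2 ≤ n)]; ring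
  refine IsLeast.csInf_eq ⟨⟨_, cycleGraph_isEdgeResolvingFunction_const (by omega), ?_⟩, ?_⟩
  · rw [sum_const, card_univ, Fintype.card_fin, nsmul_eq_mul, hcast, div_eq_mul_inv]
  · rintro _ ⟨g, hg, rfl⟩
    rw [div_le_iff₀ hn2, mul_comm]
    exact cycleGraph_le_sub_two_mul_sum (by omega) heven hg
end

section
/- Let G = K_{a_1,...,a_k} be a complete k-partite graph of order n = Σ a_i ≥ 3 with k ≥ 3 and with exactly one part of size one. Then edim_f(G) = n/2. -/
open Finset
open scoped Classical

variable {V : Type*}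

/-- The complete multipartite graph with parts `Fin (a i)`, `i : Fin k`:
two vertices are adjacent iff they lie in distinct parts. -/
def completeMultipartite {k : ℕ} (a : Fin k → ℕ) : SimpleGraph (Σ i, Fin (a i)) where
  Adj v w := v.1 ≠ w.1
  symm := ⟨fun _ _ h => Ne.symm h⟩
  loopless := ⟨fun _ h => h rfl⟩

/-!
In a complete multipartite graph every edge `pq` dominates: a vertex `w ∉ {p, q}` lies outside
the part of `p` or of `q`, so `d(pq, w) = 1`. Hence two edges are resolved exactly by the
vertices of their symmetric difference. Two distinct edges always differ in at least two
vertices, so the constant weight `1/2` resolves every pair, giving `edim_f ≤ n/2`. Conversely,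
with at least three nonempty parts any two vertices `x ≠ y` have a common neighbour `z`, and the
edges `zx`, `zy` are resolved only by `x` and `y`; so `g x + g y ≥ 1` for all `x ≠ y`, which
forces `∑ g ≥ n/2`.
-/

theorem Sym2.exists_mem_notMem_of_ne {α : Type*} {e₁ e₂ : Sym2 α} (h : ¬e₁.IsDiag)
    (hne : e₁ ≠ e₂) : ∃ u ∈ e₁, u ∉ e₂ := by
  induction e₁ using Sym2.inductionOn with
  | hf p q =>
    by_contra! hsub
    exact hne (Sym2.eq_of_ne_mem h (Sym2.mem_mk_left p q) (Sym2.mem_mk_right p q)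
      (hsub p (Sym2.mem_mk_left p q)) (hsub q (Sym2.mem_mk_right p q)))

theorem card_div_two_le_sum_of_one_le_add {α : Type*} [Fintype α] [Nontrivial α] (f : α → ℝ)
    (h : ∀ x y, x ≠ y → 1 ≤ f x + f y) : (Fintype.card α : ℝ) / 2 ≤ ∑ x, f x := by
  obtain ⟨x, hmin⟩ := Finite.exists_min f
  have hrest : ∀ y ∈ univ.erase x, max (f x) (1 - f x) ≤ f y := fun y hy =>
    max_le (hmin y) (by linarith [h x y (ne_of_mem_erase hy).symm])
  have hrest_sum := card_nsmul_le_sum _ _ _ hrest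
  have hcard : (2 : ℝ) ≤ Fintype.card α := by exact_mod_cast Fintype.one_lt_card
  rw [card_erase_of_mem (mem_univ x), card_univ, nsmul_eq_mul,
    Nat.cast_sub Fintype.card_pos, Nat.cast_one] at hrest_sum
  rw [← add_sum_erase _ _ (mem_univ x)]
  rcases le_total (1 / 2) (f x) with hx | hx
  · nlinarith [le_max_left (f x) (1 - f x)]
  · nlinarith [le_max_right (f x) (1 - f x)]

namespace SimpleGraph

variable (G : SimpleGraph V)

def EveryEdgeDominates : Prop :=
  ∀ e ∈ G.edgeSet, ∀ w ∉ e, ∃ v ∈ e, G.Adj v w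

variable {G}

theorem edgeDist_mk_eq_one_of_adj {p q w : V} (hpq : G.Adj p q) (hwq : w ≠ q)
    (hpw : G.Adj p w) : G.edgeDist s(p, q) w = 1 := by
  have hqw : 0 < G.dist q w := (hpq.symm.reachable.trans hpw.reachable).pos_dist_of_ne hwq.symm
  change min (G.dist p w) (G.dist q w) = 1
  rw [dist_eq_one_iff_adj.mpr hpw]
  omega

theorem EveryEdgeDominates.edgeDist_eq (hG : G.EveryEdgeDominates) {e : Sym2 V}
    (he : e ∈ G.edgeSet) (w : V) : G.edgeDist e w = if w ∈ e then 0 else 1 := by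
  induction e using Sym2.inductionOn with
  | hf p q =>
    split_ifs with hw
    · rcases Sym2.mem_iff.mp hw with rfl | rfl <;> simp [edgeDist]
    · obtain ⟨v, hv, hvw⟩ := hG _ he w hw
      rw [Sym2.mem_iff, not_or] at hw
      rcases Sym2.mem_iff.mp hv with rfl | rfl
      · exact edgeDist_mk_eq_one_of_adj he hw.2 hvw
      · rw [Sym2.eq_swap]
        exact edgeDist_mk_eq_one_of_adj (G.adj_symm he) hw.1 hvw

theorem EveryEdgeDominates.edgeDist_ne_iff (hG : G.EveryEdgeDominates) {e₁ e₂ : Sym2 V}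
    (he₁ : e₁ ∈ G.edgeSet) (he₂ : e₂ ∈ G.edgeSet) (w : V) :
    G.edgeDist e₁ w ≠ G.edgeDist e₂ w ↔ ¬(w ∈ e₁ ↔ w ∈ e₂) := by
  rw [hG.edgeDist_eq he₁, hG.edgeDist_eq he₂]
  split_ifs <;> simp_all

variable [Fintype V]

theorem EveryEdgeDominates.isEdgeResolvingFunction_half (hG : G.EveryEdgeDominates) :
    G.IsEdgeResolvingFunction fun _ => 1 / 2 := by
  refine ⟨fun _ => by norm_num, fun e₁ he₁ e₂ he₂ hne => ?_⟩
  obtain ⟨u, hu₁, hu₂⟩ := Sym2.exists_mem_notMem_of_ne (G.not_isDiag_of_mem_edgeSet he₁) hne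
  obtain ⟨w, hw₂, hw₁⟩ :=
    Sym2.exists_mem_notMem_of_ne (G.not_isDiag_of_mem_edgeSet he₂) (Ne.symm hne)
  have huw : u ≠ w := by rintro rfl; exact hw₁ hu₁
  have hsub : {u, w} ⊆ univ.filter fun z => G.edgeDist e₁ z ≠ G.edgeDist e₂ z := by
    intro z hz
    rw [mem_filter, hG.edgeDist_ne_iff he₁ he₂, and_iff_right (mem_univ z)]
    rcases mem_insert.mp hz with rfl | hz
    · tauto
    · rw [mem_singleton.mp hz]; tauto
  calc (1 : ℝ) = ∑ _z ∈ {u, w}, 1 / 2 := by rw [sum_pair huw]; norm_num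
    _ ≤ _ := sum_le_sum_of_subset_of_nonneg hsub fun _ _ _ => by norm_num

theorem EveryEdgeDominates.one_le_add_of_adj {g : V → ℝ} (hG : G.EveryEdgeDominates)
    (hg : G.IsEdgeResolvingFunction g) {x y z : V} (hxy : x ≠ y) (hzx : G.Adj z x)
    (hzy : G.Adj z y) : 1 ≤ g x + g y := by
  have hne : s(z, x) ≠ s(z, y) := by
    rw [Ne, Sym2.congr_right]; exact hxy
  have hsub : (univ.filter fun w => G.edgeDist s(z, x) w ≠ G.edgeDist s(z, y) w) ⊆ {x, y} := by
    intro w hw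
    rw [mem_filter, hG.edgeDist_ne_iff hzx hzy, Sym2.mem_iff, Sym2.mem_iff] at hw
    rw [mem_insert, mem_singleton]
    tauto
  calc 1 ≤ _ := hg.2 _ hzx _ hzy hne
    _ ≤ ∑ w ∈ {x, y}, g w := sum_le_sum_of_subset_of_nonneg hsub fun w _ _ => (hg.1 w).1
    _ = g x + g y := sum_pair hxy

theorem EveryEdgeDominates.edimf_eq [Nontrivial V] (hG : G.EveryEdgeDominates)
    (hcommon : ∀ x y : V, ∃ z, G.Adj z x ∧ G.Adj z y) :
    G.edimf = Fintype.card V / 2 := by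
  have hmem : (Fintype.card V : ℝ) / 2 ∈
      {x | ∃ g, G.IsEdgeResolvingFunction g ∧ ∑ v, g v = x} :=
    ⟨_, hG.isEdgeResolvingFunction_half, by simp [div_eq_mul_inv]⟩
  have hlower : (Fintype.card V : ℝ) / 2 ∈
      lowerBounds {x | ∃ g, G.IsEdgeResolvingFunction g ∧ ∑ v, g v = x} := by
    rintro _ ⟨g, hg, rfl⟩
    refine card_div_two_le_sum_of_one_le_add g fun x y hxy => ?_
    obtain ⟨z, hzx, hzy⟩ := hcommon x y
    exact hG.one_le_add_of_adj hg hxy hzx hzy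
  exact le_antisymm (csInf_le ⟨_, hlower⟩ hmem) (le_csInf ⟨_, hmem⟩ hlower)

end SimpleGraph

theorem completeMultipartite_everyEdgeDominates {k : ℕ} (a : Fin k → ℕ) :
    (completeMultipartite a).EveryEdgeDominates := by
  intro e he w _
  induction e using Sym2.inductionOn with
  | hf p q =>
    by_cases hwp : w.1 = p.1
    · exact ⟨q, Sym2.mem_mk_right p q, fun h => he (hwp ▸ h.symm)⟩
    · exact ⟨p, Sym2.mem_mk_left p q, Ne.symm hwp⟩

theorem completeMultipartite_exists_common_adj {k : ℕ} {a : Fin k → ℕ}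
    (hthird : ∀ i j : Fin k, ∃ l, l ≠ i ∧ l ≠ j ∧ 0 < a l) (x y : Σ i, Fin (a i)) :
    ∃ z, (completeMultipartite a).Adj z x ∧ (completeMultipartite a).Adj z y := by
  obtain ⟨l, hlx, hly, hl⟩ := hthird x.1 y.1
  exact ⟨⟨l, ⟨0, hl⟩⟩, hlx, hly⟩

/-- For a complete `k`-partite graph (`k ≥ 3`) of order `n = Σ aᵢ ≥ 3` with exactly
one part of size one, `edim_f(G) = n/2`. -/
theorem stmt_17 (k : ℕ) (hk : 3 ≤ k) (a : Fin k → ℕ) (i₀ : Fin k)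
    (h1 : a i₀ = 1) (h2 : ∀ i : Fin k, i ≠ i₀ → 2 ≤ a i) :
    (completeMultipartite a).edimf = ((∑ i, a i : ℕ) : ℝ) / 2 := by
  have hpos : ∀ i, 0 < a i := fun i => by
    by_cases hi : i = i₀
    · exact hi ▸ h1 ▸ one_pos
    · exact (h2 i hi).trans_lt' two_pos
  have hthird : ∀ i j : Fin k, ∃ l, l ≠ i ∧ l ≠ j ∧ 0 < a l := fun i j => by
    obtain ⟨l, -, hl⟩ := exists_mem_notMem_of_card_lt_card (s := {i, j}) (t := univ)
      (card_le_two.trans_lt (by rw [card_univ, Fintype.card_fin]; omega))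
    exact ⟨l, by simp_all [not_or]⟩
  obtain ⟨j, -, hj, -⟩ := hthird i₀ i₀
  have : Nontrivial (Σ i, Fin (a i)) :=
    ⟨⟨i₀, 0, hpos i₀⟩, ⟨j, 0, hpos j⟩, fun h => hj (congrArg Sigma.fst h).symm⟩
  rw [(completeMultipartite_everyEdgeDominates a).edimf_eq
    (completeMultipartite_exists_common_adj hthird)]
  simp [Fintype.card_sigma]
end
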